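/- For fixed j ≥ 1 and each integer s ≥ 0, the normalized s-th moment E((X_{n,j}/n)^s) converges, as n → ∞, to binom(s - 1/(k+1), s) / binom(s + j - k/(k+1), s); i.e., X_{n,j}/n converges in moments (and in distribution) to a Beta(k/(k+1), j-1+2/(k+1)) distributed random variable. -/

import Mathlib

/-!
Write `⟨x⟩_t = x(x+1)⋯(x+t-1)/t!` (`Ring.multichoose x t`), `u = k/(k+1)`, `v = j - 1 + 2/(k+1)`
and `n = N + j`. Then `P{X_{n,j} = t + 1} = ⟨u⟩_t ⟨v⟩_{N-t} / ⟨u+v⟩_N`, a beta-binomial law.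
By Chu–Vandermonde its rising-factorial moments are exact:
`E ⟨u + T⟩_s = ⟨u⟩_s ⟨u + v + N⟩_s / ⟨u + v⟩_s`, which after division by `n^s` tends to
`⟨u⟩_s / ⟨u + v⟩_s`, the `s`-th moment of Beta(u, v). Uniformly in `T ≤ N`, `((T + 1)/n)^s`
differs from `s! ⟨u + T⟩_s / n^s` by `O(1/n)`.
-/

/-- Generalized binomial coefficient `binom(x, n) = x(x-1)⋯(x-n+1)/n!`. -/
noncomputable def gbinom (x : ℝ) (n : ℕ) : ℝ :=
  (∏ i ∈ Finset.range n, (x - i)) / (Nat.factorial n)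

/-- `P{X_{n,j} = m}`: the exact distribution of the number of descendants of node `j`
in a random ordered increasing `k`-tree of size `n` (for `m ≥ 1`; zero if `m+j > n+1`). -/
noncomputable def Pdesc (k n j m : ℕ) : ℝ :=
  if m + j ≤ n + 1 then
    gbinom ((m : ℝ) - 1 - 1 / ((k : ℝ) + 1)) (m - 1)
      * gbinom ((n : ℝ) - m - 1 + 2 / ((k : ℝ) + 1)) (n - m - j + 1)
      / gbinom ((n : ℝ) - k / ((k : ℝ) + 1)) (n - j)
  else 0

open Finset Filter Topology

namespace Real

theorem multichoose_eq_prod (x : ℝ) (n : ℕ) :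
    Ring.multichoose x n = (∏ i ∈ range n, (x + i)) / n.factorial := by
  rw [eq_div_iff (by positivity), mul_comm, ← nsmul_eq_mul,
    Ring.factorial_nsmul_multichoose_eq_ascPochhammer, Polynomial.ascPochhammer_smeval_eq_eval]
  induction n with
  | zero => simp
  | succ n ih => rw [ascPochhammer_succ_eval, ih, prod_range_succ]

theorem multichoose_nonneg {x : ℝ} (hx : 0 ≤ x) (n : ℕ) : 0 ≤ Ring.multichoose x n := by
  rw [multichoose_eq_prod]
  positivity

theorem multichoose_pos {x : ℝ} (hx : 0 < x) (n : ℕ) : 0 < Ring.multichoose x n := by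
  rw [multichoose_eq_prod]
  positivity

theorem multichoose_mul_multichoose_add_comm (x : ℝ) (s t : ℕ) :
    Ring.multichoose x t * Ring.multichoose (x + t) s =
      Ring.multichoose x s * Ring.multichoose (x + s) t := by
  have h : ∀ a b : ℕ, Ring.multichoose x a * Ring.multichoose (x + a) b
      = (∏ i ∈ range (a + b), (x + i)) / (a.factorial * b.factorial) := by
    intro a b
    simp only [multichoose_eq_prod, prod_range_add, Nat.cast_add, add_assoc]
    field_simp
  rw [h, h, add_comm s, mul_comm (s.factorial : ℝ)]

theorem multichoose_add (a b : ℝ) (N : ℕ) :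
    Ring.multichoose (a + b) N =
      ∑ t ∈ range (N + 1), Ring.multichoose a t * Ring.multichoose b (N - t) := by
  -- upper negation reduces this to Chu–Vandermonde for `Ring.choose`
  have h : ∀ (r : ℝ) (n : ℕ), Ring.multichoose r n = (-1) ^ n * Ring.choose (-r) n := by
    intro r n
    rw [Ring.choose_neg', Units.smul_def, zsmul_eq_mul, Int.cast_negOnePow, ← mul_assoc,
      zpow_natCast, ← mul_pow]
    simp
  rw [h, neg_add, Ring.add_choose_eq _ (Commute.all _ _),
    Nat.sum_antidiagonal_eq_sum_range_succ fun i j => Ring.choose (-a) i * Ring.choose (-b) j,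
    mul_sum]
  refine sum_congr rfl fun t ht => ?_
  rw [h, h, ← pow_sub_mul_pow (-1 : ℝ) (Nat.le_of_lt_succ (mem_range.1 ht))]
  ring

end Real

theorem gbinom_eq_multichoose {x y : ℝ} {n : ℕ} (h : y = x + n - 1) :
    gbinom y n = Ring.multichoose x n := by
  rw [gbinom, Real.multichoose_eq_prod, ← prod_range_reflect]
  congr 1
  refine prod_congr rfl fun i hi => ?_
  rw [Nat.cast_sub (by simp at hi; omega), Nat.cast_sub (by simp at hi; omega), h]
  push_cast
  ring

theorem abs_prod_sub_prod_le {ι : Type*} (s : Finset ι) {f g : ι → ℝ} {M δ : ℝ} (hM : 1 ≤ M)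
    (hf : ∀ i ∈ s, |f i| ≤ M) (hg : ∀ i ∈ s, |g i| ≤ M) (hfg : ∀ i ∈ s, |f i - g i| ≤ δ) :
    |∏ i ∈ s, f i - ∏ i ∈ s, g i| ≤ #s * M ^ #s * δ := by
  classical
  induction s using Finset.induction_on with
  | empty => simp
  | insert a s ha ih =>
    simp only [forall_mem_insert] at hf hg hfg
    have hδ : 0 ≤ δ := (abs_nonneg _).trans hfg.1
    have hgs : |∏ i ∈ s, g i| ≤ M ^ #s := by
      rw [abs_prod]
      exact (prod_le_prod (fun _ _ => abs_nonneg _) hg.2).trans_eq (prod_const M)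
    rw [prod_insert ha, prod_insert ha, card_insert_of_notMem ha]
    calc |f a * ∏ i ∈ s, f i - g a * ∏ i ∈ s, g i|
        = |f a * (∏ i ∈ s, f i - ∏ i ∈ s, g i) + (f a - g a) * ∏ i ∈ s, g i| := by ring_nf
      _ ≤ M * (#s * M ^ #s * δ) + δ * M ^ #s := by
        refine (abs_add_le _ _).trans (add_le_add ?_ ?_) <;> rw [abs_mul]
        · exact mul_le_mul hf.1 (ih hf.2 hg.2 hfg.2) (abs_nonneg _) (by linarith)
        · exact mul_le_mul hfg.1 hgs (abs_nonneg _) hδ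
      _ = #s * M ^ (#s + 1) * δ + δ * M ^ #s := by ring
      _ ≤ #s * M ^ (#s + 1) * δ + δ * M ^ (#s + 1) := by gcongr; exact Nat.le_succ _
      _ = ↑(#s + 1) * M ^ (#s + 1) * δ := by push_cast; ring

theorem tendsto_natCast_add_div_natCast_add (a c : ℝ) :
    Tendsto (fun N : ℕ => (N + a) / (N + c)) atTop (𝓝 1) := by
  have hden : Tendsto (fun N : ℕ => (N : ℝ) + c) atTop atTop :=
    tendsto_atTop_add_const_right _ c tendsto_natCast_atTop_atTop
  have h : Tendsto (fun N : ℕ => 1 + (a - c) / (N + c)) atTop (𝓝 (1 + 0)) :=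
    tendsto_const_nhds.add (tendsto_const_nhds.div_atTop hden)
  rw [add_zero] at h
  refine h.congr' ?_
  filter_upwards [hden.eventually_gt_atTop 0] with N hN
  field_simp
  ring

noncomputable def betaBinomial (u v : ℝ) (N t : ℕ) : ℝ :=
  Ring.multichoose u t * Ring.multichoose v (N - t) / Ring.multichoose (u + v) N

section BetaBinomial

variable {u v : ℝ}

theorem betaBinomial_nonneg (hu : 0 ≤ u) (hv : 0 ≤ v) (N t : ℕ) : 0 ≤ betaBinomial u v N t :=
  div_nonneg (mul_nonneg (Real.multichoose_nonneg hu _) (Real.multichoose_nonneg hv _))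
    (Real.multichoose_nonneg (add_nonneg hu hv) _)

theorem sum_multichoose_mul_betaBinomial (huv : 0 < u + v) (N s : ℕ) :
    ∑ t ∈ range (N + 1), Ring.multichoose (u + t) s * betaBinomial u v N t
      = Ring.multichoose u s * Ring.multichoose (u + v + N) s / Ring.multichoose (u + v) s := by
  have hN := (Real.multichoose_pos huv N).ne'
  have hs := (Real.multichoose_pos huv s).ne'
  have hshift := Real.multichoose_mul_multichoose_add_comm (u + v) s N
  calc ∑ t ∈ range (N + 1), Ring.multichoose (u + t) s * betaBinomial u v N t
      = Ring.multichoose u s * (∑ t ∈ range (N + 1),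
          Ring.multichoose (u + s) t * Ring.multichoose v (N - t)) /
        Ring.multichoose (u + v) N := by
        rw [mul_sum, sum_div]
        refine sum_congr rfl fun t _ => ?_
        rw [betaBinomial, ← mul_assoc, ← Real.multichoose_mul_multichoose_add_comm]
        ring
    _ = Ring.multichoose u s * Ring.multichoose (u + v + s) N / Ring.multichoose (u + v) N := by
        rw [← Real.multichoose_add, add_right_comm]
    _ = Ring.multichoose u s * Ring.multichoose (u + v + N) s / Ring.multichoose (u + v) s := by
        rw [div_eq_div_iff hN hs]
        linear_combination -(Ring.multichoose u s) * hshift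

theorem sum_betaBinomial (huv : 0 < u + v) (N : ℕ) :
    ∑ t ∈ range (N + 1), betaBinomial u v N t = 1 := by
  simpa [Ring.multichoose_zero_right] using sum_multichoose_mul_betaBinomial huv N 0

theorem betaBinomial_self (N : ℕ) :
    betaBinomial u v N N = ∏ i ∈ range N, (u + i) / (u + v + i) := by
  rw [betaBinomial, Nat.sub_self, Ring.multichoose_zero_right, mul_one, prod_div_distrib,
    Real.multichoose_eq_prod, Real.multichoose_eq_prod]
  field_simp

theorem tendsto_prod_add_div_add_atTop_zero (hu : 0 ≤ u) (hv : 0 < v) :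
    Tendsto (fun N : ℕ => ∏ i ∈ range N, (u + i) / (u + v + i)) atTop (𝓝 0) := by
  set c := v / (u + v + 1)
  have hc : 0 < c := by positivity
  -- `1 - x ≤ exp (-x)` and `u + v + i ≤ (u + v + 1) (i + 1)`; the harmonic series diverges
  have hfactor : ∀ i : ℕ, (u + i) / (u + v + i) ≤ Real.exp (-(c * (1 / (i + 1)))) := by
    intro i
    refine le_trans ?_ (Real.add_one_le_exp _)
    have hi : (0 : ℝ) ≤ i := i.cast_nonneg
    rw [div_le_iff₀ (by positivity)]
    have : c * (u + v + i) ≤ v * (i + 1) := by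
      rw [div_mul_eq_mul_div, div_le_iff₀ (by positivity)]
      nlinarith [mul_nonneg hv.le hi, mul_nonneg (mul_nonneg hv.le hi) (add_nonneg hu hv.le)]
    field_simp
    nlinarith
  have hharmonic : Tendsto (fun N : ℕ => Real.exp (-(c * ∑ i ∈ range N, 1 / ((i : ℝ) + 1))))
      atTop (𝓝 0) :=
    Real.tendsto_exp_atBot.comp <| tendsto_neg_atTop_atBot.comp <|
      Real.tendsto_sum_range_one_div_nat_succ_atTop.const_mul_atTop hc
  refine squeeze_zero (fun N => prod_nonneg fun i _ => by positivity) (fun N => ?_) hharmonic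
  rw [mul_sum, ← sum_neg_distrib, Real.exp_sum]
  exact prod_le_prod (fun i _ => by positivity) fun i _ => hfactor i

theorem tendsto_betaBinomial_self (hu : 0 ≤ u) (hv : 0 < v) :
    Tendsto (fun N : ℕ => betaBinomial u v N N) atTop (𝓝 0) := by
  simpa only [betaBinomial_self] using tendsto_prod_add_div_add_atTop_zero hu hv

theorem tendsto_sum_prod_div_mul_betaBinomial (huv : 0 < u + v) (c : ℝ) (s : ℕ) :
    Tendsto (fun N : ℕ => ∑ t ∈ range (N + 1),
        (∏ i ∈ range s, (u + t + i) / (N + c)) * betaBinomial u v N t)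
      atTop (𝓝 (Ring.multichoose u s / Ring.multichoose (u + v) s)) := by
  have hlim : Tendsto (fun N : ℕ => Ring.multichoose u s / Ring.multichoose (u + v) s *
      ∏ i ∈ range s, (N + (u + v + i)) / (N + c)) atTop
      (𝓝 (Ring.multichoose u s / Ring.multichoose (u + v) s * 1)) :=
    tendsto_const_nhds.mul <| by
      simpa using tendsto_finsetProd (range s) fun i _ => tendsto_natCast_add_div_natCast_add _ c
  rw [mul_one] at hlim
  refine hlim.congr fun N => ?_
  have hs := (Real.multichoose_pos huv s).ne'
  simp_rw [prod_div_distrib, div_mul_eq_mul_div, ← sum_div, prod_const, card_range]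
  have hrising : ∀ x : ℝ, ∏ i ∈ range s, (x + i) = s.factorial * Ring.multichoose x s := by
    intro x
    rw [Real.multichoose_eq_prod]
    field_simp
  simp_rw [hrising, mul_assoc, ← mul_sum, sum_multichoose_mul_betaBinomial huv]
  simp_rw [show ∀ x : ℝ, (N : ℝ) + (u + v + x) = u + v + N + x from fun x => by ring, hrising]
  field_simp

theorem abs_div_pow_sub_prod_div_le (hu : 0 ≤ u) {c : ℝ} (hc : 1 ≤ c) {N t : ℕ} (ht : t ≤ N)
    (s : ℕ) : |((t + 1) / (N + c)) ^ s - ∏ i ∈ range s, (u + t + i) / (N + c)|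
      ≤ s * (1 + u + s) ^ (s + 1) / (N + c) := by
  have hNc : (0 : ℝ) < N + c := by positivity
  have htN : (t : ℝ) ≤ N := by exact_mod_cast ht
  have hM : (1 : ℝ) ≤ 1 + u + s := by linarith [(s.cast_nonneg : (0 : ℝ) ≤ s)]
  rw [pow_eq_prod_const]
  refine (abs_prod_sub_prod_le _ hM (δ := (1 + u + s) / (N + c)) ?_ ?_ ?_).trans_eq ?_
  rotate_left 3
  · rw [card_range]; ring
  all_goals intro i hi
  all_goals have hi : (i : ℝ) < s := by exact_mod_cast mem_range.1 hi
  all_goals have hi0 : (0 : ℝ) ≤ i := i.cast_nonneg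
  · rw [abs_of_nonneg (by positivity), div_le_iff₀ hNc]
    nlinarith
  · rw [abs_of_nonneg (by positivity), div_le_iff₀ hNc]
    nlinarith
  · rw [← sub_div, abs_div, abs_of_pos hNc]
    gcongr
    rw [abs_le]
    constructor <;> linarith

theorem tendsto_sum_pow_mul_betaBinomial (hu : 0 ≤ u) (hv : 0 < v) {c : ℝ} (hc : 1 ≤ c)
    (s : ℕ) :
    Tendsto (fun N : ℕ => ∑ t ∈ range (N + 1), ((t + 1) / (N + c)) ^ s * betaBinomial u v N t)
      atTop (𝓝 (Ring.multichoose u s / Ring.multichoose (u + v) s)) := by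
  have huv : 0 < u + v := by linarith
  refine tendsto_of_tendsto_of_dist (tendsto_sum_prod_div_mul_betaBinomial huv c s) ?_
  set C : ℝ := s * (1 + u + s) ^ (s + 1)
  have hbound : ∀ N : ℕ, dist (∑ t ∈ range (N + 1),
        (∏ i ∈ range s, (u + t + i) / (N + c)) * betaBinomial u v N t)
      (∑ t ∈ range (N + 1), ((t + 1) / (N + c)) ^ s * betaBinomial u v N t) ≤ C / (N + c) := by
    intro N
    rw [dist_comm, Real.dist_eq, ← sum_sub_distrib]
    calc _ ≤ ∑ t ∈ range (N + 1), C / (N + c) * betaBinomial u v N t := by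
          refine (abs_sum_le_sum_abs _ _).trans (sum_le_sum fun t ht => ?_)
          rw [← sub_mul, abs_mul, abs_of_nonneg (betaBinomial_nonneg hu hv.le N t)]
          exact mul_le_mul_of_nonneg_right
            (abs_div_pow_sub_prod_div_le hu hc (Nat.lt_succ_iff.1 (mem_range.1 ht)) s)
            (betaBinomial_nonneg hu hv.le N t)
      _ = C / (N + c) := by rw [← mul_sum, sum_betaBinomial huv, mul_one]
  exact squeeze_zero (fun _ => dist_nonneg) hbound <|
    tendsto_const_nhds.div_atTop (tendsto_atTop_add_const_right _ c tendsto_natCast_atTop_atTop)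

end BetaBinomial

section Pdesc

variable (k j N : ℕ)

theorem Pdesc_eq_betaBinomial {t : ℕ} (ht : t < N) :
    Pdesc k (N + j) j (t + 1) = betaBinomial (k / (k + 1)) (j - 1 + 2 / (k + 1)) N t := by
  have hk : (k : ℝ) + 1 ≠ 0 := by positivity
  rw [Pdesc, if_pos (by omega), betaBinomial, Nat.add_sub_cancel,
    show N + j - (t + 1) - j + 1 = N - t by omega, Nat.add_sub_cancel]
  rw [gbinom_eq_multichoose (x := k / (k + 1)), gbinom_eq_multichoose (x := j - 1 + 2 / (k + 1)),
    gbinom_eq_multichoose (x := k / (k + 1) + (j - 1 + 2 / (k + 1)))]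
  all_goals push_cast [Nat.cast_sub ht.le]; field_simp; ring

/-- At `m = N + 1` the truncated subtraction in `Pdesc` yields the index `n - m - j + 1 = 1`
instead of `0`, which multiplies the beta-binomial probability by `j - 2 + 2/(k+1)`. -/
theorem Pdesc_last :
    Pdesc k (N + j) j (N + 1) =
      (j - 2 + 2 / (k + 1)) * betaBinomial (k / (k + 1)) (j - 1 + 2 / (k + 1)) N N := by
  have hk : (k : ℝ) + 1 ≠ 0 := by positivity
  rw [Pdesc, if_pos (by omega), betaBinomial, Nat.add_sub_cancel,
    show N + j - (N + 1) - j + 1 = 1 by omega, Nat.add_sub_cancel, Nat.sub_self,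
    Ring.multichoose_zero_right]
  rw [gbinom_eq_multichoose (x := k / (k + 1)), gbinom_eq_multichoose (x := j - 2 + 2 / (k + 1)),
    gbinom_eq_multichoose (x := k / (k + 1) + (j - 1 + 2 / (k + 1))), Ring.multichoose_one_right]
  · ring
  all_goals push_cast; field_simp; ring

theorem Pdesc_eq_zero {m : ℕ} (hm : N + 1 < m) : Pdesc k (N + j) j m = 0 :=
  if_neg (by omega)

theorem tsum_pow_mul_Pdesc (s : ℕ) :
    ∑' m : ℕ, ((m + 1) / ((N + j : ℕ) : ℝ)) ^ s * Pdesc k (N + j) j (m + 1) =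
      ∑ t ∈ range (N + 1), ((t + 1) / (N + j)) ^ s *
          betaBinomial (k / (k + 1)) (j - 1 + 2 / (k + 1)) N t
        + ((N + 1) / (N + j)) ^ s * (j - 3 + 2 / (k + 1)) *
          betaBinomial (k / (k + 1)) (j - 1 + 2 / (k + 1)) N N := by
  rw [tsum_eq_sum (s := range (N + 1)) fun m hm => by
      rw [Pdesc_eq_zero k j N (by simp at hm; omega), mul_zero],
    sum_range_succ, sum_range_succ, sum_congr rfl fun t ht =>
      by rw [Pdesc_eq_betaBinomial k j N (mem_range.1 ht)], Pdesc_last]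
  push_cast
  ring

end Pdesc

theorem ktree_descendants_moments_general (k j : ℕ) (hj : 1 ≤ j) (s : ℕ) :
    Tendsto (fun n : ℕ => ∑' m : ℕ, (((m : ℝ) + 1) / (n : ℝ)) ^ s * Pdesc k n j (m + 1))
      atTop
      (nhds (gbinom ((s : ℝ) - 1 / ((k : ℝ) + 1)) s
        / gbinom ((s : ℝ) + j - k / ((k : ℝ) + 1)) s)) := by
  have hk : (k : ℝ) + 1 ≠ 0 := by positivity
  have hj' : (1 : ℝ) ≤ j := by exact_mod_cast hj
  set u : ℝ := k / (k + 1)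
  set v : ℝ := j - 1 + 2 / (k + 1)
  have hu : 0 ≤ u := by positivity
  have hv : 0 < v := by positivity
  have hlimit : gbinom ((s : ℝ) - 1 / ((k : ℝ) + 1)) s / gbinom ((s : ℝ) + j - k / ((k : ℝ) + 1)) s
      = Ring.multichoose u s / Ring.multichoose (u + v) s := by
    rw [gbinom_eq_multichoose (x := u), gbinom_eq_multichoose (x := u + v)] <;>
      · simp only [u, v]; field_simp; ring
  have hlast : Tendsto (fun N : ℕ => ((N + 1) / (N + j)) ^ s * (j - 3 + 2 / (k + 1)) *
      betaBinomial u v N N) atTop (𝓝 0) := by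
    simpa using (((tendsto_natCast_add_div_natCast_add 1 j).pow s).mul_const _).mul
      (tendsto_betaBinomial_self hu hv)
  rw [hlimit, ← tendsto_add_atTop_iff_nat j]
  simp_rw [tsum_pow_mul_Pdesc]
  simpa using (tendsto_sum_pow_mul_betaBinomial hu hv hj' s).add hlast

/-- For fixed `j ≥ 1`, the `s`-th moment of `X_{n,j}/n` converges to
`binom(s-1/(k+1), s)/binom(s+j-k/(k+1), s)`, i.e. `X_{n,j}/n` converges in moments to a
`Beta(k/(k+1), j-1+2/(k+1))` random variable. -/
theorem ktree_descendants_moments (k j : ℕ) (hk : 1 ≤ k) (hj : 1 ≤ j) (s : ℕ) :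
    Tendsto (fun n : ℕ => ∑' m : ℕ, (((m : ℝ) + 1) / (n : ℝ)) ^ s * Pdesc k n j (m + 1))
      atTop
      (nhds (gbinom ((s : ℝ) - 1 / ((k : ℝ) + 1)) s
        / gbinom ((s : ℝ) + j - k / ((k : ℝ) + 1)) s)) :=
  ktree_descendants_moments_general k j hj s
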